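/- Let a, d ∈ ℝ, b > 0, T > 0, and let s : ℤ → ℂ be absolutely summable. Define its discrete-time LCT as Ŝ(ω) = (T/√(i·2πb))·Σ_{k∈ℤ} s(k)·exp(i·(a·(kT)² − 2·kT·ω + d·ω²)/(2b)). Then for every n ∈ ℤ, s(n) = (1/√(−i·2πb)) · ∫_{−πb/T}^{πb/T} Ŝ(ω)·exp(−i·(a·(nT)² − 2·nT·ω + d·ω²)/(2b)) dω. -/

import Mathlib

/-- Discrete-time LCT of a sequence s : ℤ → ℂ with parameters a, d, b (b > 0)
and sampling period T; here √(i·2πb) = √(2πb)·e^{iπ/4}. -/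
noncomputable def dtlct (a d b T : ℝ) (s : ℤ → ℂ) (ω : ℝ) : ℂ :=
  ((T : ℂ) / ((Real.sqrt (2 * Real.pi * b) : ℂ) * Complex.exp (Complex.I * Real.pi / 4))) *
    ∑' k : ℤ, s k *
      Complex.exp (Complex.I *
        (a * ((k : ℝ) * T) ^ 2 - 2 * ((k : ℝ) * T) * ω + d * ω ^ 2) / (2 * b))

/-!
Multiplying `dtlct a d b T s ω` by the inverse kernel at `n`, the `d ω²` chirps cancel and the
`k`-th term becomes `s k · e^{i a T² (k² - n²)/(2b)} · e^{i (n - k) (T/b) ω}`, of modulus `‖s k‖`.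
Absolute summability lets us integrate term by term, and over the band `|ω| ≤ π b / T` the
characters `e^{i m (T/b) ω}` are orthogonal, so only `k = n` survives, with weight `2π b / T`.
The constants cancel because `√(i·2πb) · √(-i·2πb) = 2πb`.
-/

open Complex MeasureTheory intervalIntegral
open scoped Real

theorem integral_cexp_I_int_mul_eq_ite (τ : ℝ) (m : ℤ) :
    ∫ ω in -(π / τ)..π / τ, exp (I * ((m * τ : ℝ) : ℂ) * ω) =
      if m = 0 then ((2 * π / τ : ℝ) : ℂ) else 0 := by
  split_ifs with hm
  · simp only [hm, Int.cast_zero, zero_mul, ofReal_zero, mul_zero, exp_zero,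
      intervalIntegral.integral_const, real_smul, mul_one]
    push_cast
    ring
  rcases eq_or_ne τ 0 with rfl | hτ
  · simp
  have hc : I * ((m * τ : ℝ) : ℂ) ≠ 0 := by
    simp [hm, hτ]
  have hτ' : (τ : ℂ) ≠ 0 := ofReal_ne_zero.mpr hτ
  rw [integral_exp_mul_complex hc, div_eq_zero_iff, sub_eq_zero]
  refine Or.inl (exp_eq_exp_iff_exists_int.mpr ⟨m, ?_⟩)
  push_cast
  field_simp
  ring

theorem integral_tsum_mul_cexp_I_int_mul (τ : ℝ) {c : ℤ → ℂ} (hc : Summable fun k => ‖c k‖)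
    (n : ℤ) :
    ∫ ω in -(π / τ)..π / τ, ∑' k : ℤ, c k * exp (I * (((n - k : ℤ) * τ : ℝ) : ℂ) * ω) =
      ((2 * π / τ : ℝ) : ℂ) * c n := by
  have hnorm : ∀ k (ω : ℝ), ‖c k * exp (I * (((n - k : ℤ) * τ : ℝ) : ℂ) * ω)‖ = ‖c k‖ := by
    intro k ω
    rw [norm_mul, mul_assoc, ← ofReal_mul, norm_exp_I_mul_ofReal, mul_one]
  have hswap := hasSum_integral_of_dominated_convergence (μ := volume) (a := -(π / τ))
    (b := π / τ) (F := fun k ω => c k * exp (I * (((n - k : ℤ) * τ : ℝ) : ℂ) * ω))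
    (fun k _ => ‖c k‖) (fun k => (by fun_prop : Continuous _).aestronglyMeasurable)
    (fun k => .of_forall fun ω _ => (hnorm k ω).le) (.of_forall fun _ _ => hc)
    intervalIntegrable_const
    (.of_forall fun ω _ => (Summable.of_norm (by simpa only [hnorm] using hc)).hasSum)
  have hterm : ∀ k, ∫ ω in -(π / τ)..π / τ, c k * exp (I * (((n - k : ℤ) * τ : ℝ) : ℂ) * ω) =
      if k = n then ((2 * π / τ : ℝ) : ℂ) * c n else 0 := by
    intro k
    rw [intervalIntegral.integral_const_mul, integral_cexp_I_int_mul_eq_ite]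
    by_cases hk : k = n
    · simp [hk, mul_comm]
    · simp [hk, sub_eq_zero, Ne.symm hk]
  rw [← hswap.tsum_eq, tsum_congr hterm, tsum_ite_eq]

theorem cexp_chirp_mul_cexp_neg_chirp (a d b T ω : ℝ) (k n : ℤ) :
    exp (I * (a * ((k : ℝ) * T) ^ 2 - 2 * ((k : ℝ) * T) * ω + d * ω ^ 2) / (2 * b)) *
      exp (-I * (a * ((n : ℝ) * T) ^ 2 - 2 * ((n : ℝ) * T) * ω + d * ω ^ 2) / (2 * b)) =
    exp (I * ((a * T ^ 2 * (k ^ 2 - n ^ 2) / (2 * b) : ℝ) : ℂ)) *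
      exp (I * (((n - k : ℤ) * (T / b) : ℝ) : ℂ) * ω) := by
  rw [← exp_add, ← exp_add]
  congr 1
  push_cast
  ring

theorem sqrt_mul_cexp_mul_sqrt_mul_cexp_neg {x : ℝ} (hx : 0 ≤ x) :
    ((√x : ℂ) * exp (I * π / 4)) * ((√x : ℂ) * exp (-I * π / 4)) = x := by
  rw [mul_mul_mul_comm, ← ofReal_mul, Real.mul_self_sqrt hx, ← exp_add, neg_mul, neg_div,
    add_neg_cancel, exp_zero, mul_one]

/-- Inversion formula for the discrete-time LCT: a summable sequence is recovered
from its DT-LCT by integrating against the inverse kernel over the fundamental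
band [−πb/T, πb/T]. Here √(−i·2πb) = √(2πb)·e^{−iπ/4}. -/
theorem stmt7 (a d b T : ℝ) (hb : 0 < b) (hT : 0 < T)
    (s : ℤ → ℂ) (hs : Summable fun n => ‖s n‖) :
    ∀ n : ℤ, s n =
      (1 / ((Real.sqrt (2 * Real.pi * b) : ℂ) * Complex.exp (-Complex.I * Real.pi / 4))) *
        ∫ ω in (-(Real.pi * b / T))..(Real.pi * b / T),
          dtlct a d b T s ω *
            Complex.exp (-Complex.I *
              (a * ((n : ℝ) * T) ^ 2 - 2 * ((n : ℝ) * T) * ω + d * ω ^ 2) / (2 * b)) := by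
  intro n
  set c : ℤ → ℂ := fun k => s k * exp (I * ((a * T ^ 2 * (k ^ 2 - n ^ 2) / (2 * b) : ℝ) : ℂ))
  have hc : Summable fun k => ‖c k‖ := by
    simpa only [c, norm_mul, norm_exp_I_mul_ofReal, mul_one] using hs
  have hpoint : ∀ ω : ℝ, dtlct a d b T s ω *
      exp (-I * (a * ((n : ℝ) * T) ^ 2 - 2 * ((n : ℝ) * T) * ω + d * ω ^ 2) / (2 * b)) =
      T / ((√(2 * π * b) : ℂ) * exp (I * π / 4)) *
        ∑' k : ℤ, c k * exp (I * (((n - k : ℤ) * (T / b) : ℝ) : ℂ) * ω) := by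
    intro ω
    rw [dtlct, mul_assoc, ← tsum_mul_right]
    congr 1
    refine tsum_congr fun k => ?_
    rw [mul_assoc, cexp_chirp_mul_cexp_neg_chirp, ← mul_assoc]
  have hband : π * b / T = π / (T / b) := by field_simp
  rw [integral_congr fun ω _ => hpoint ω, intervalIntegral.integral_const_mul, hband,
    integral_tsum_mul_cexp_I_int_mul _ hc]
  have hcn : c n = s n := by simp [c]
  have hroots := sqrt_mul_cexp_mul_sqrt_mul_cexp_neg (x := 2 * π * b) (by positivity)
  have hsqrt : (√(2 * π * b) : ℂ) ≠ 0 := by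
    rw [ofReal_ne_zero]; positivity
  have hT' : (T : ℂ) ≠ 0 := ofReal_ne_zero.mpr hT.ne'
  rw [hcn]
  push_cast at hroots ⊢
  field_simp
  linear_combination (norm := ring_nf) s n * hroots
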